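/- For every $\phi \in L^\infty(\mathbb{T})$, the norm of $M(\phi) = T(\phi)+H(\phi)$ on $H^2(\mathbb{T})$ satisfies $\|\phi\|_{L^\infty} \le \|M(\phi)\| \le 2\|\phi\|_{L^\infty}$. -/

import Mathlib

/-!
The upper bound holds because `P` and `J` have norm at most one. For the lower bound, test `M(φ)`
on `tⁿ f ∈ H²` for a trigonometric polynomial `f` and large `n`: the Hankel part
`P(φ · J(tⁿ f)) = P(t⁻ⁿ⁻¹ φ Jf)` tends to `0` and the Toeplitz part `P(tⁿ φ f)` approaches
`tⁿ φ f`, whose norm is `‖φ f‖`. Hence `‖L(φ)‖ ≤ ‖M(φ)‖`, and `‖L(φ)‖ ≥ ‖φ‖_∞`.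
-/
open MeasureTheory Complex Real
noncomputable section
namespace TH

abbrev Tp : ℝ := 2 * Real.pi
instance : Fact (0 < Tp) := ⟨by positivity⟩
abbrev 𝕋 := AddCircle Tp
abbrev μ : Measure 𝕋 := AddCircle.haarAddCircle
abbrev L2 := Lp ℂ 2 μ

open scoped Classical in
/-- Multiplication operator by `φ` (defined to be `0` if `φ` is not essentially bounded). -/
def Lmul (φ : 𝕋 → ℂ) : L2 →L[ℂ] L2 :=
  if hφ : MemLp φ ⊤ μ then
    LinearMap.mkContinuous
      { toFun := fun f => ((Lp.memLp f).smul (p := ⊤) hφ).toLp (φ • ⇑f)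
        map_add' := fun f g => by
          rw [← MemLp.toLp_add]
          exact MemLp.toLp_congr _ _ (by
            filter_upwards [Lp.coeFn_add f g] with x hx
            simp only [Pi.smul_apply, smul_eq_mul, Pi.mul_apply, hx, Pi.add_apply, mul_add])
        map_smul' := fun c f => by
          rw [RingHom.id_apply, ← MemLp.toLp_const_smul]
          exact MemLp.toLp_congr ((Lp.memLp (c • f)).smul (p := ⊤) hφ)
            (((Lp.memLp f).smul (p := ⊤) hφ).const_smul c) (by
            filter_upwards [Lp.coeFn_smul c f] with x hx
            simp only [Pi.smul_apply, smul_eq_mul, Pi.mul_apply, hx]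
            ring) }
      (eLpNorm φ ⊤ μ).toReal
      (fun f => by
        simp only [LinearMap.coe_mk, AddHom.coe_mk]
        rw [Lp.norm_toLp, Lp.norm_def, ← ENNReal.toReal_mul]
        refine ENNReal.toReal_mono ?_ ?_
        · exact ENNReal.mul_ne_top hφ.eLpNorm_ne_top (Lp.eLpNorm_ne_top f)
        · exact eLpNorm_smul_le_eLpNorm_top_mul_eLpNorm 2 (Lp.aestronglyMeasurable f) φ)
  else 0

/-- Composition with `x ↦ -x` on `L²`. -/
def Cneg : L2 → L2 :=
  Lp.compMeasurePreserving (fun x : 𝕋 => -x) (Measure.measurePreserving_neg μ)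

/-- The flip operator `J : f(t) ↦ t⁻¹ f(t⁻¹)`. -/
def Jop : L2 →L[ℂ] L2 :=
  { toFun := fun f => Lmul (fun x => fourier (-1) x) (Cneg f)
    map_add' := fun f g => by
      show Lmul _ (Cneg (f + g)) = Lmul _ (Cneg f) + Lmul _ (Cneg g)
      unfold Cneg
      rw [map_add, map_add]
    map_smul' := fun c f => by
      show Lmul _ (Cneg (c • f)) = c • Lmul _ (Cneg f)
      rw [← map_smul (Lmul fun x => fourier (-1) x)]
      congr 1
      apply Lp.ext
      unfold Cneg
      filter_upwards [Lp.coeFn_compMeasurePreserving (c • f) (Measure.measurePreserving_neg μ),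
        Lp.coeFn_smul c (Lp.compMeasurePreserving (fun x : 𝕋 => -x)
          (Measure.measurePreserving_neg μ) f),
        (Measure.measurePreserving_neg μ).quasiMeasurePreserving.ae_eq_comp (Lp.coeFn_smul c f),
        Lp.coeFn_compMeasurePreserving f (Measure.measurePreserving_neg μ)]
        with x hx1 hx2 hx3 hx4
      refine hx1.trans (hx3.trans ?_)
      have h5 : ((c • (↑↑f : 𝕋 → ℂ)) ∘ Neg.neg) x = c • (↑↑f ∘ Neg.neg) x := rfl
      rw [h5, ← hx4]
      exact hx2.symm
    cont := by
      exact (Lmul _).continuous.comp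
        (Lp.isometry_compMeasurePreserving (E := ℂ) (p := 2)
          (Measure.measurePreserving_neg μ)).continuous }

/-- The Hardy space `H²(𝕋)`: closed span of `{t^n : n ≥ 0}`. -/
def Hardy : Submodule ℂ L2 :=
  (Submodule.span ℂ (Set.range fun n : ℕ => (fourierLp 2 (n : ℤ) : L2))).topologicalClosure

instance : CompleteSpace Hardy :=
  (Submodule.isClosed_topologicalClosure _).completeSpace_coe

/-- The Riesz projection, as an operator on `L²(𝕋)`. -/
def Pproj : L2 →L[ℂ] L2 := Hardy.subtypeL ∘L Hardy.orthogonalProjectionOnto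

/-- The Toeplitz operator `T(φ) : f ↦ P(φ f)` on `H²`. -/
def Top (φ : 𝕋 → ℂ) : Hardy →L[ℂ] Hardy :=
  Hardy.orthogonalProjectionOnto ∘L Lmul φ ∘L Hardy.subtypeL

/-- The Hankel operator `H(φ) : f ↦ P(φ · Jf)` on `H²`. -/
def Hop (φ : 𝕋 → ℂ) : Hardy →L[ℂ] Hardy :=
  Hardy.orthogonalProjectionOnto ∘L Lmul φ ∘L Jop ∘L Hardy.subtypeL

/-- The Toeplitz + Hankel operator `M(φ) = T(φ) + H(φ)`. -/
def Mop (φ : 𝕋 → ℂ) : Hardy →L[ℂ] Hardy := Top φ + Hop φ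

/-- The flip `φ̃(t) = φ(t⁻¹)` of a function on the circle. -/
def flip (φ : 𝕋 → ℂ) : 𝕋 → ℂ := fun x => φ (-x)

open Filter Topology

lemma coeFn_Lmul {φ : 𝕋 → ℂ} (hφ : MemLp φ ⊤ μ) (f : L2) : ⇑(Lmul φ f) =ᵐ[μ] φ • ⇑f := by
  rw [Lmul, dif_pos hφ]
  exact ((Lp.memLp f).smul (p := ⊤) hφ).coeFn_toLp

lemma Lmul_Lmul {φ ψ : 𝕋 → ℂ} (hφ : MemLp φ ⊤ μ) (hψ : MemLp ψ ⊤ μ) (f : L2) :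
    Lmul φ (Lmul ψ f) = Lmul (φ * ψ) f := by
  apply Lp.ext
  filter_upwards [coeFn_Lmul hφ (Lmul ψ f), coeFn_Lmul hψ f, coeFn_Lmul (hψ.mul hφ) f]
    with x h₁ h₂ h₃
  simp only [h₁, h₃, smul_eq_mul, Pi.mul_apply, h₂, mul_assoc]

lemma opNorm_Lmul_le {φ : 𝕋 → ℂ} (hφ : MemLp φ ⊤ μ) : ‖Lmul φ‖ ≤ ‖hφ.toLp φ‖ := by
  rw [Lmul, dif_pos hφ, Lp.norm_toLp]
  exact LinearMap.mkContinuous_norm_le _ ENNReal.toReal_nonneg _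

/- For `c < ‖φ‖_∞` the set `{|φ| > c}` has positive measure, and `L(φ)` stretches its indicator
by a factor at least `c`. -/
lemma norm_toLp_le_opNorm_Lmul {φ : 𝕋 → ℂ} (hφ : MemLp φ ⊤ μ) : ‖hφ.toLp φ‖ ≤ ‖Lmul φ‖ := by
  by_contra! hlt
  obtain ⟨c, hLc, hcφ⟩ := exists_between hlt
  have hc : 0 ≤ c := (norm_nonneg _).trans hLc.le
  set ψ := hφ.toLp φ
  set s := {x | c < ‖ψ x‖}
  have hs : MeasurableSet s :=
    measurableSet_lt measurable_const (Lp.stronglyMeasurable ψ).measurable.norm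
  have hμs : μ s ≠ 0 := by
    intro h0
    have hbound : ∀ᵐ x ∂μ, ‖ψ x‖ ≤ c := by
      filter_upwards [measure_eq_zero_iff_ae_notMem.mp h0] with x hx using not_lt.mp hx
    have := Lp.norm_le_of_ae_bound hc hbound
    simp only [ENNReal.toReal_top, inv_zero, rpow_zero, one_mul] at this
    linarith
  set f := indicatorConstLp 2 hs (measure_ne_top μ s) (1 : ℂ)
  have hf : 0 < ‖f‖ := by
    rw [norm_indicatorConstLp' two_ne_zero hμs, norm_one, one_mul]
    exact Real.rpow_pos_of_pos (ENNReal.toReal_pos hμs (measure_ne_top μ s)) _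
  have hcf : ‖(c : ℂ) • f‖ ≤ ‖Lmul φ f‖ := by
    refine Lp.norm_le_norm_of_ae_le ?_
    have hf_ae : ⇑f =ᵐ[μ] s.indicator fun _ => 1 := indicatorConstLp_coeFn
    filter_upwards [Lp.coeFn_smul (c : ℂ) f, coeFn_Lmul hφ f, hf_ae, hφ.coeFn_toLp]
      with x h1 h2 h3 h4
    simp only [h1, h2, Pi.smul_apply, smul_eq_mul, Pi.mul_apply]
    rw [h3]
    by_cases hx : x ∈ s
    · have hx' : c < ‖φ x‖ := h4 ▸ hx
      simpa [hx, abs_of_nonneg hc] using hx'.le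
    · simp [hx]
  rw [norm_smul, Complex.norm_real, Real.norm_of_nonneg hc] at hcf
  nlinarith [(Lmul φ).le_opNorm f]

lemma memLp_top_fourier (n : ℤ) : MemLp (fun x : 𝕋 => fourier n x) ⊤ μ :=
  memLp_top_of_bound (fourier n).continuous.aestronglyMeasurable 1
    (.of_forall fun x => by simp [fourier_apply, Circle.norm_coe])

def shift (n : ℤ) : L2 →L[ℂ] L2 := Lmul (fun x => fourier n x)

lemma coeFn_shift (n : ℤ) (f : L2) : ⇑(shift n f) =ᵐ[μ] fun x => fourier n x * f x :=
  coeFn_Lmul (memLp_top_fourier n) f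

lemma norm_shift (n : ℤ) (f : L2) : ‖shift n f‖ = ‖f‖ := by
  refine le_antisymm (Lp.norm_le_norm_of_ae_le ?_) (Lp.norm_le_norm_of_ae_le ?_) <;>
    filter_upwards [coeFn_shift n f] with x hx <;> simp [hx, fourier_apply, Circle.norm_coe]

lemma opNorm_shift_le (n : ℤ) : ‖shift n‖ ≤ 1 :=
  (shift n).opNorm_le_bound zero_le_one fun f => by rw [norm_shift, one_mul]

lemma shift_fourierLp (n k : ℤ) : shift n (fourierLp 2 k) = fourierLp 2 (n + k) := by
  apply Lp.ext
  filter_upwards [coeFn_shift n (fourierLp 2 k), coeFn_fourierLp (T := Tp) 2 k,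
    coeFn_fourierLp (T := Tp) 2 (n + k)] with x h₁ h₂ h₃
  rw [h₁, h₂, h₃, fourier_add]

lemma shift_shift (m n : ℤ) (f : L2) : shift m (shift n f) = shift (m + n) f := by
  rw [shift, shift, Lmul_Lmul (memLp_top_fourier m) (memLp_top_fourier n)]
  congr 2
  funext x
  exact fourier_add.symm

lemma Lmul_shift {φ : 𝕋 → ℂ} (hφ : MemLp φ ⊤ μ) (n : ℤ) (f : L2) :
    Lmul φ (shift n f) = shift n (Lmul φ f) := by
  rw [shift, Lmul_Lmul hφ (memLp_top_fourier n), Lmul_Lmul (memLp_top_fourier n) hφ, mul_comm]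

lemma coeFn_Cneg (f : L2) : ⇑(Cneg f) =ᵐ[μ] fun x => f (-x) :=
  Lp.coeFn_compMeasurePreserving f (Measure.measurePreserving_neg μ)

lemma norm_Cneg (f : L2) : ‖Cneg f‖ = ‖f‖ :=
  Lp.norm_compMeasurePreserving f (Measure.measurePreserving_neg μ)

lemma Cneg_shift (n : ℤ) (f : L2) : Cneg (shift n f) = shift (-n) (Cneg f) := by
  apply Lp.ext
  filter_upwards [coeFn_Cneg (shift n f), coeFn_shift (-n) (Cneg f), coeFn_Cneg f,
    (Measure.measurePreserving_neg μ).quasiMeasurePreserving.ae_eq_comp (coeFn_shift n f)]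
    with x h₁ h₂ h₃ h₄
  simp only [Function.comp_apply] at h₄
  rw [h₁, h₄, h₂, h₃, fourier_apply, fourier_apply, smul_neg, neg_smul]

lemma norm_Jop (f : L2) : ‖Jop f‖ = ‖f‖ :=
  (norm_shift (-1) (Cneg f)).trans (norm_Cneg f)

lemma Lmul_Jop_shift {φ : 𝕋 → ℂ} (hφ : MemLp φ ⊤ μ) (n : ℤ) (f : L2) :
    Lmul φ (Jop (shift n f)) = shift (-(n + 1)) (Lmul φ (Cneg f)) := by
  change Lmul φ (shift (-1) (Cneg (shift n f))) = _
  rw [Cneg_shift, shift_shift, Lmul_shift hφ, neg_add', neg_add_eq_sub]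

lemma fourierLp_mem_Hardy {k : ℤ} (hk : 0 ≤ k) : fourierLp 2 k ∈ Hardy :=
  Submodule.le_topologicalClosure _ (Submodule.subset_span ⟨k.toNat, by simp [hk]⟩)

lemma fourierLp_mem_orthogonal_Hardy {k : ℤ} (hk : k < 0) : fourierLp 2 k ∈ Hardyᗮ := by
  rw [Hardy, Submodule.orthogonal_closure]
  refine (Submodule.span_singleton_le_iff_mem _ _).mp (Submodule.isOrtho_span.mpr ?_)
  rintro _ rfl _ ⟨n, rfl⟩
  exact orthonormal_fourier.2 (by omega)

lemma Mop_apply (φ : 𝕋 → ℂ) (x : Hardy) :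
    (Mop φ x : L2) = Hardy.starProjection (Lmul φ x) + Hardy.starProjection (Lmul φ (Jop x)) :=
  rfl

lemma opNorm_Mop_le (φ : 𝕋 → ℂ) : ‖Mop φ‖ ≤ 2 * ‖Lmul φ‖ := by
  refine (Mop φ).opNorm_le_bound (by positivity) fun x => ?_
  rw [← Submodule.norm_coe, Mop_apply]
  calc _ ≤ ‖Lmul φ x‖ + ‖Lmul φ (Jop x)‖ := (norm_add_le _ _).trans
        (add_le_add (Hardy.norm_starProjection_apply_le _) (Hardy.norm_starProjection_apply_le _))
    _ ≤ ‖Lmul φ‖ * ‖(x : L2)‖ + ‖Lmul φ‖ * ‖Jop x‖ :=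
        add_le_add ((Lmul φ).le_opNorm _) ((Lmul φ).le_opNorm _)
    _ = 2 * ‖Lmul φ‖ * ‖x‖ := by rw [norm_Jop, Submodule.norm_coe]; ring

def trigPoly : Submodule ℂ L2 := Submodule.span ℂ (Set.range (fourierLp 2))

lemma dense_trigPoly : Dense (trigPoly : Set L2) :=
  Submodule.dense_iff_topologicalClosure_eq_top.mpr (span_fourierLp_closure_eq_top (by norm_num))

lemma eventually_shift_mem {S : Submodule ℂ L2} {l : Filter ℕ} {m : ℕ → ℤ}
    (h : ∀ k, ∀ᶠ n in l, fourierLp 2 (m n + k) ∈ S) {p : L2} (hp : p ∈ trigPoly) :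
    ∀ᶠ n in l, shift (m n) p ∈ S := by
  induction hp using Submodule.span_induction with
  | mem _ hx =>
    obtain ⟨k, rfl⟩ := hx
    simpa only [shift_fourierLp] using h k
  | zero => exact .of_forall fun n => by simp
  | add _ _ _ _ hx hy => filter_upwards [hx, hy] with n hx hy using by simpa using S.add_mem hx hy
  | smul c _ _ hx => filter_upwards [hx] with n hx using by simpa using S.smul_mem c hx

/- The operators `K.starProjection ∘ shift (m n)` have norm at most one, so convergence to `0`
on the dense subspace of trigonometric polynomials propagates to all of `L²`. -/
lemma tendsto_starProjection_shift {K : Submodule ℂ L2} [K.HasOrthogonalProjection]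
    {m : ℕ → ℤ} (h : ∀ k, ∀ᶠ n in atTop, fourierLp 2 (m n + k) ∈ Kᗮ) (g : L2) :
    Tendsto (fun n => K.starProjection (shift (m n) g)) atTop (𝓝 0) := by
  let T : ℕ → L2 →L[ℂ] L2 := fun n => K.starProjection ∘L shift (m n)
  have hT_norm : ∃ C, ∀ n, ‖T n‖ ≤ C := ⟨1, fun n =>
    (ContinuousLinearMap.opNorm_comp_le _ _).trans
      (mul_le_one₀ K.starProjection_norm_le (norm_nonneg _) (opNorm_shift_le _))⟩
  have hT : Equicontinuous fun n => ⇑(T n) :=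
    ((NormedSpace.equicontinuous_TFAE T).out 5 1).mp hT_norm
  refine dense_trigPoly.induction (P := fun g => Tendsto (fun n => T n g) atTop (𝓝 0))
    (fun p hp => ?_) (hT.isClosed_setOfPred_tendsto continuous_const) g
  exact tendsto_const_nhds.congr' ((eventually_shift_mem h hp).mono fun n hn =>
    ((K.starProjection_apply_eq_zero_iff).mpr hn).symm)

lemma norm_Lmul_apply_le_of_mem_trigPoly {φ : 𝕋 → ℂ} (hφ : MemLp φ ⊤ μ) {f : L2}
    (hf : f ∈ trigPoly) : ‖Lmul φ f‖ ≤ ‖Mop φ‖ * ‖f‖ := by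
  set u := Lmul φ f
  set v := Lmul φ (Cneg f)
  have hA : Tendsto (fun n : ℕ => Hardyᗮ.starProjection (shift n u)) atTop (𝓝 0) := by
    refine tendsto_starProjection_shift (fun k => ?_) u
    filter_upwards [eventually_ge_atTop k.natAbs] with n hn
    rw [Submodule.orthogonal_orthogonal]
    exact fourierLp_mem_Hardy (by omega)
  have hB : Tendsto (fun n : ℕ => Hardy.starProjection (shift (-(n + 1)) v)) atTop (𝓝 0) := by
    refine tendsto_starProjection_shift (fun k => ?_) v
    filter_upwards [eventually_ge_atTop k.natAbs] with n hn
    exact fourierLp_mem_orthogonal_Hardy (by omega)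
  have hHardy : ∀ᶠ n : ℕ in atTop, shift n f ∈ Hardy := by
    refine eventually_shift_mem (fun k => ?_) hf
    filter_upwards [eventually_ge_atTop k.natAbs] with n hn
    exact fourierLp_mem_Hardy (by omega)
  have hbound : ∀ᶠ n : ℕ in atTop, ‖u‖ ≤ ‖Mop φ‖ * ‖f‖ +
      ‖Hardyᗮ.starProjection (shift n u)‖ + ‖Hardy.starProjection (shift (-(n + 1)) v)‖ := by
    filter_upwards [hHardy] with n hn
    have hdecomp : shift n u = (Mop φ ⟨shift n f, hn⟩ : L2) +
        Hardyᗮ.starProjection (shift n u) - Hardy.starProjection (shift (-(n + 1)) v) := by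
      rw [Mop_apply, Lmul_shift hφ, Lmul_Jop_shift hφ]
      nth_rewrite 1 [← Hardy.starProjection_add_starProjection_orthogonal (shift n u)]
      abel
    calc ‖u‖ = ‖shift n u‖ := (norm_shift _ _).symm
      _ ≤ ‖(Mop φ ⟨shift n f, hn⟩ : L2)‖ + ‖Hardyᗮ.starProjection (shift n u)‖ +
          ‖Hardy.starProjection (shift (-(n + 1)) v)‖ := by
        rw [congrArg norm hdecomp]
        exact (norm_sub_le _ _).trans (by gcongr; exact norm_add_le _ _)
      _ ≤ _ := by
        gcongr
        simpa [norm_shift] using (Mop φ).le_opNorm ⟨shift n f, hn⟩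
  refine ge_of_tendsto ?_ hbound
  simpa using (tendsto_const_nhds.add hA.norm).add hB.norm

lemma opNorm_Lmul_le_opNorm_Mop {φ : 𝕋 → ℂ} (hφ : MemLp φ ⊤ μ) : ‖Lmul φ‖ ≤ ‖Mop φ‖ :=
  (Lmul φ).opNorm_le_bound (norm_nonneg (Mop φ)) fun f =>
    dense_trigPoly.induction (P := fun f => ‖Lmul φ f‖ ≤ ‖Mop φ‖ * ‖f‖)
      (fun _ hp => norm_Lmul_apply_le_of_mem_trigPoly hφ hp)
      (isClosed_le (Lmul φ).continuous.norm (continuous_const.mul continuous_norm)) f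

/-- `‖φ‖_∞ ≤ ‖M(φ)‖ ≤ 2 ‖φ‖_∞`. -/
theorem stmt_6 (φ : 𝕋 → ℂ) (hφ : MemLp φ ⊤ μ) :
    ‖hφ.toLp φ‖ ≤ ‖Mop φ‖ ∧ ‖Mop φ‖ ≤ 2 * ‖hφ.toLp φ‖ :=
  ⟨(norm_toLp_le_opNorm_Lmul hφ).trans (opNorm_Lmul_le_opNorm_Mop hφ),
    (opNorm_Mop_le φ).trans (by gcongr; exact opNorm_Lmul_le hφ)⟩

end TH
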